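/- Let K be a colored regularity graph such that there is no colored homomorphism from the paw graph (the complement of P₃ + K₁, i.e., a triangle with a pendant edge) into K. Then f_K(2/3) ≥ 1/3. -/

import Mathlib

/-- The three possible colors of an edge of a colored regularity graph. -/
inductive EColor : Type
  | white
  | gray
  | black
deriving DecidableEq

/-- A colored regularity graph (CRG): a finite nonempty vertex set (here `Fin n`),
each vertex colored white (`vcol i = false`) or black (`vcol i = true`), and each
unordered pair of distinct vertices colored white, gray or black. -/
structure CRG : Type where
  n : ℕ
  npos : 0 < n
  vcol : Fin n → Bool
  ecol : Fin n → Fin n → EColor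
  ecol_symm : ∀ i j, ecol i j = ecol j i

namespace CRG

/-- The function `f_K(p) = (1/k²)[p(|VW| + 2|EW|) + (1-p)(|VB| + 2|EB|)]`; the
counts over ordered pairs of distinct vertices give `2|EW|` and `2|EB|`. -/
noncomputable def fK (K : CRG) (p : ℝ) : ℝ :=
  (1 / (K.n : ℝ) ^ 2) *
    (p * (((Finset.univ.filter (fun i : Fin K.n => K.vcol i = false)).card : ℝ)
        + ((Finset.univ.filter (fun ij : Fin K.n × Fin K.n =>
            ij.1 ≠ ij.2 ∧ K.ecol ij.1 ij.2 = EColor.white)).card : ℝ))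
   + (1 - p) * (((Finset.univ.filter (fun i : Fin K.n => K.vcol i = true)).card : ℝ)
        + ((Finset.univ.filter (fun ij : Fin K.n × Fin K.n =>
            ij.1 ≠ ij.2 ∧ K.ecol ij.1 ij.2 = EColor.black)).card : ℝ)))

/-- The matrix `M_K(p)`. -/
noncomputable def M (K : CRG) (p : ℝ) : Matrix (Fin K.n) (Fin K.n) ℝ :=
  Matrix.of fun i j =>
    if i = j then (if K.vcol i then 1 - p else p)
    else
      match K.ecol i j with
      | EColor.white => p
      | EColor.gray => 0
      | EColor.black => 1 - p

/-- The function `g_K(p)`: the minimum (here: infimum, which is attained) of the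
quadratic form `uᵀ M_K(p) u` over the standard simplex. -/
noncomputable def gK (K : CRG) (p : ℝ) : ℝ :=
  sInf { x : ℝ | ∃ u : Fin K.n → ℝ, (∀ i, 0 ≤ u i) ∧ (∑ i, u i) = 1 ∧
    x = ∑ i, ∑ j, u i * K.M p i j * u j }

end CRG

/-- A colored homomorphism from a simple graph `F` to a CRG `K`. -/
def CHom {V : Type} (F : SimpleGraph V) (K : CRG) : Prop :=
  ∃ φ : V → Fin K.n,
    (∀ u v : V, F.Adj u v →
      (φ u = φ v ∧ K.vcol (φ u) = true) ∨
      (φ u ≠ φ v ∧ K.ecol (φ u) (φ v) ≠ EColor.white)) ∧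
    (∀ u v : V, u ≠ v → ¬ F.Adj u v →
      (φ u = φ v ∧ K.vcol (φ u) = false) ∨
      (φ u ≠ φ v ∧ K.ecol (φ u) (φ v) ≠ EColor.black))

/-- The paw graph (complement of `P₃ + K₁`): a triangle on `{0,2,3}` together with
the pendant edge `{1,3}`, on vertex set `Fin 4`. -/
def pawGraph : SimpleGraph (Fin 4) :=
  SimpleGraph.fromRel (fun x y =>
    (x = 0 ∧ y = 2) ∨ (x = 0 ∧ y = 3) ∨ (x = 2 ∧ y = 3) ∨ (x = 1 ∧ y = 3))

/-!
Paw-freeness of `K` forces two local facts: both ends of a gray edge are white vertices (otherwise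
the triangle of the paw goes to a black vertex and its pendant edge along the gray edge), and if
`ab` is gray then every other vertex `c` sees `a` or `b` along a white edge (otherwise send the
paw to `a, a, b, c`). Induction on the vertex set, deleting both ends of a gray edge `ab`, then
gives `2|EG| ≤ |VW| + 2|EW|`: each other vertex has at most one gray and at least one white edge to
`{a, b}`, and `ab` itself is paid for by the white vertices `a` and `b`. Since
`k² = |VW| + |VB| + 2(|EW| + |EG| + |EB|)`, this gives `k² ≤ 2(|VW| + 2|EW|) + (|VB| + 2|EB|)`,
which is `f_K(2/3) ≥ 1/3`.
-/

open Finset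

section PairCount

variable {V : Type*} [DecidableEq V]

def pairCount (R : V → V → Prop) [DecidableRel R] (s : Finset V) : ℕ :=
  ∑ x ∈ s, ∑ y ∈ s, if x ≠ y ∧ R x y then 1 else 0

lemma card_filter_ne_eq_pairCount_univ [Fintype V] (R : V → V → Prop) [DecidableRel R] :
    #{p : V × V | p.1 ≠ p.2 ∧ R p.1 p.2} = pairCount R univ := by
  rw [card_filter, Fintype.sum_prod_type]
  rfl

lemma sum_sum_insert_insert {f : V → V → ℕ} (hf : ∀ x y, f x y = f y x) (hdiag : ∀ x, f x x = 0)
    {a b : V} {t : Finset V} (ha : a ∉ insert b t) (hb : b ∉ t) :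
    ∑ x ∈ insert a (insert b t), ∑ y ∈ insert a (insert b t), f x y =
      2 * f a b + 2 * ∑ y ∈ t, (f a y + f b y) + ∑ x ∈ t, ∑ y ∈ t, f x y := by
  have col : ∀ c, ∑ x ∈ t, f x c = ∑ y ∈ t, f c y := fun c => sum_congr rfl fun x _ => hf x c
  simp only [sum_insert ha, sum_insert hb, sum_add_distrib, col, hdiag, hf b a]
  ring

lemma pairCount_insert_insert {R : V → V → Prop} [DecidableRel R] (hR : ∀ x y, R x y → R y x)
    {a b : V} {t : Finset V} (ha : a ∉ insert b t) (hb : b ∉ t) :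
    pairCount R (insert a (insert b t)) =
      2 * (if a ≠ b ∧ R a b then 1 else 0) +
        2 * ∑ y ∈ t, ((if a ≠ y ∧ R a y then 1 else 0) + if b ≠ y ∧ R b y then 1 else 0) +
        pairCount R t := by
  refine sum_sum_insert_insert (fun x y => ?_) (by simp) ha hb
  simp only [ne_comm, Iff.intro (hR x y) (hR y x)]

theorem pairCount_le_card_filter_add_pairCount {G W : V → V → Prop} [DecidableRel G]
    [DecidableRel W] {P : V → Prop} [DecidablePred P]
    (hG : ∀ x y, G x y → G y x) (hW : ∀ x y, W x y → W y x) (hGW : ∀ x y, G x y → ¬ W x y)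
    (hP : ∀ a b, a ≠ b → G a b → P a)
    (hcover : ∀ a b c, a ≠ b → c ≠ a → c ≠ b → G a b → W a c ∨ W b c) (s : Finset V) :
    pairCount G s ≤ #{x ∈ s | P x} + pairCount W s := by
  induction s using Finset.strongInduction with
  | H s ih =>
  by_cases hedge : ∃ a ∈ s, ∃ b ∈ s, a ≠ b ∧ G a b
  · obtain ⟨a, ha, b, hb, hab, hGab⟩ := hedge
    set t := (s.erase a).erase b
    have hbt : b ∉ t := notMem_erase b _
    have hat : a ∉ insert b t := by simp [t, hab]
    have hst : s = insert a (insert b t) := by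
      rw [insert_erase (mem_erase.2 ⟨hab.symm, hb⟩), insert_erase ha]
    have hts : t ⊂ s := (erase_ssubset (mem_erase.2 ⟨hab.symm, hb⟩)).trans (erase_ssubset ha)
    have hPs : #{x ∈ insert a (insert b t) | P x} = #{x ∈ t | P x} + 2 := by
      rw [filter_insert, filter_insert, if_pos (hP a b hab hGab),
        if_pos (hP b a hab.symm (hG a b hGab)),
        card_insert_of_notMem fun h => hat (insert_subset_insert b (filter_subset _ t) h),
        card_insert_of_notMem fun h => hbt (filter_subset _ t h)]
    -- a vertex outside `ab` has at most one `G`-edge and at least one `W`-edge to `{a, b}`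
    have hcross : ∀ y ∈ t, ((if a ≠ y ∧ G a y then 1 else 0) + if b ≠ y ∧ G b y then 1 else 0) ≤
        (if a ≠ y ∧ W a y then 1 else 0) + if b ≠ y ∧ W b y then 1 else 0 := by
      intro y hy
      have hya : y ≠ a := fun h => hat (mem_insert_of_mem (h ▸ hy))
      have hyb : y ≠ b := fun h => hbt (h ▸ hy)
      have hWy := hcover a b y hab hya hyb hGab
      have hGy : ¬ (G a y ∧ G b y) := fun ⟨hay, hby⟩ => hWy.elim (hGW a y hay) (hGW b y hby)
      split_ifs <;> simp_all
    have hsum := sum_le_sum hcross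
    have hind := ih t hts
    rw [hst, pairCount_insert_insert hG hat hbt, pairCount_insert_insert hW hat hbt, hPs,
      if_pos ⟨hab, hGab⟩, if_neg fun h => hGW a b hGab h.2]
    omega
  · push Not at hedge
    have hzero : pairCount G s = 0 :=
      sum_eq_zero fun x hx => sum_eq_zero fun y hy => if_neg fun h => hedge x hx y hy h.1 h.2
    omega

end PairCount

namespace CRG

variable (K : CRG)

/-- Whether an edge (`adj = true`) or non-edge (`adj = false`) of a graph may be mapped to the
pair `(i, j)` by a colored homomorphism into `K`. -/
def CanHost (adj : Bool) (i j : Fin K.n) : Prop :=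
  (i = j ∧ K.vcol i = adj) ∨ (i ≠ j ∧ K.ecol i j ≠ if adj then .white else .black)

def vertexCount (c : Bool) : ℕ := #{i | K.vcol i = c}

/-- Counts ordered pairs, i.e. twice the number of edges of color `e`. -/
def orderedEdgeCount (e : EColor) : ℕ := #{p : Fin K.n × Fin K.n | p.1 ≠ p.2 ∧ K.ecol p.1 p.2 = e}

lemma fK_eq (p : ℝ) :
    K.fK p = (1 / (K.n : ℝ) ^ 2) *
      (p * (K.vertexCount false + K.orderedEdgeCount .white) +
        (1 - p) * (K.vertexCount true + K.orderedEdgeCount .black)) :=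
  rfl

variable {K}

lemma CanHost.symm {adj : Bool} {i j : Fin K.n} : K.CanHost adj i j → K.CanHost adj j i
  | .inl ⟨hij, h⟩ => .inl ⟨hij.symm, hij ▸ h⟩
  | .inr ⟨hij, h⟩ => .inr ⟨hij.symm, K.ecol_symm i j ▸ h⟩

lemma canHost_self {adj : Bool} {i : Fin K.n} : K.CanHost adj i i ↔ K.vcol i = adj := by
  simp [CanHost]

lemma canHost_of_gray (adj : Bool) {i j : Fin K.n} (hij : i ≠ j) (hg : K.ecol i j = .gray) :
    K.CanHost adj i j :=
  Or.inr ⟨hij, by cases adj <;> simp [hg]⟩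

lemma chom_pawGraph (v : Fin 4 → Fin K.n)
    (h02 : K.CanHost true (v 0) (v 2)) (h03 : K.CanHost true (v 0) (v 3))
    (h23 : K.CanHost true (v 2) (v 3)) (h13 : K.CanHost true (v 1) (v 3))
    (h01 : K.CanHost false (v 0) (v 1)) (h12 : K.CanHost false (v 1) (v 2)) :
    CHom pawGraph K := by
  refine ⟨v, fun u w huw => ?_, fun u w huw hadj => ?_⟩
  · show K.CanHost true (v u) (v w)
    fin_cases u <;> fin_cases w <;> simp [pawGraph] at huw ⊢ <;>
      first | assumption | exact CanHost.symm ‹_›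
  · show K.CanHost false (v u) (v w)
    fin_cases u <;> fin_cases w <;> simp [pawGraph] at huw hadj ⊢ <;>
      first | assumption | exact CanHost.symm ‹_›

lemma vcol_eq_false_of_ecol_eq_gray (h : ¬ CHom pawGraph K) {i j : Fin K.n} (hij : i ≠ j)
    (hg : K.ecol i j = .gray) : K.vcol i = false := by
  by_contra hb
  have hi : K.CanHost true i i := canHost_self.2 (by simpa using hb)
  have hij' := canHost_of_gray (adj := true) hij hg
  exact h (chom_pawGraph ![i, j, i, i] hi hi hi hij'.symm (canHost_of_gray _ hij hg)
    (canHost_of_gray _ hij hg).symm)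

lemma ecol_eq_white_or_of_ecol_eq_gray (h : ¬ CHom pawGraph K) {a b c : Fin K.n} (hab : a ≠ b)
    (hca : c ≠ a) (hcb : c ≠ b) (hg : K.ecol a b = .gray) :
    K.ecol a c = .white ∨ K.ecol b c = .white := by
  by_contra! hc
  have hac : K.CanHost true a c := .inr ⟨hca.symm, hc.1⟩
  exact h (chom_pawGraph ![a, a, b, c] (canHost_of_gray _ hab hg) hac (.inr ⟨hcb.symm, hc.2⟩) hac
    (canHost_self.2 (vcol_eq_false_of_ecol_eq_gray h hab hg)) (canHost_of_gray _ hab hg))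

lemma orderedEdgeCount_gray_le_of_not_chom_pawGraph (h : ¬ CHom pawGraph K) :
    K.orderedEdgeCount .gray ≤ K.vertexCount false + K.orderedEdgeCount .white := by
  rw [orderedEdgeCount, orderedEdgeCount, vertexCount,
    card_filter_ne_eq_pairCount_univ fun i j => K.ecol i j = .gray,
    card_filter_ne_eq_pairCount_univ fun i j => K.ecol i j = .white]
  refine pairCount_le_card_filter_add_pairCount (fun i j hg => ?_) (fun i j hw => ?_)
    (fun i j hg hw => ?_) (fun _ _ => vcol_eq_false_of_ecol_eq_gray h)
    (fun _ _ _ => ecol_eq_white_or_of_ecol_eq_gray h) univ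
  · rwa [K.ecol_symm]
  · rwa [K.ecol_symm]
  · simp [hg] at hw

variable (K)

lemma vertexCount_false_add_vertexCount_true : K.vertexCount false + K.vertexCount true = K.n := by
  simpa [vertexCount] using card_filter_add_card_filter_not (s := univ) fun i => K.vcol i = false

lemma orderedEdgeCount_white_add_gray_add_black_add_n_eq_sq :
    K.orderedEdgeCount .white + K.orderedEdgeCount .gray + K.orderedEdgeCount .black + K.n =
      K.n ^ 2 := by
  have hdiag : #{p : Fin K.n × Fin K.n | p.1 = p.2} = K.n := by
    rw [← univ_product_univ, ← diag_eq_filter, diag_card, card_fin]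
  have hsum : K.orderedEdgeCount .white + K.orderedEdgeCount .gray + K.orderedEdgeCount .black +
      #{p : Fin K.n × Fin K.n | p.1 = p.2} = #(univ : Finset (Fin K.n × Fin K.n)) := by
    simp only [orderedEdgeCount, card_filter]
    rw [← sum_add_distrib, ← sum_add_distrib, ← sum_add_distrib, card_eq_sum_ones]
    refine sum_congr rfl fun ⟨i, j⟩ _ => ?_
    by_cases hij : i = j
    · simp [hij]
    · cases K.ecol i j <;> simp [hij]
  simpa [hdiag, sq] using hsum

variable {K}

lemma one_third_le_fK_two_thirds
    (hK : K.orderedEdgeCount .gray ≤ K.vertexCount false + K.orderedEdgeCount .white) :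
    1 / 3 ≤ K.fK (2 / 3) := by
  have hv := K.vertexCount_false_add_vertexCount_true
  have hp := K.orderedEdgeCount_white_add_gray_add_black_add_n_eq_sq
  have hcount : K.n ^ 2 ≤ 2 * (K.vertexCount false + K.orderedEdgeCount .white) +
      (K.vertexCount true + K.orderedEdgeCount .black) := by
    omega
  have hn : (0 : ℝ) < K.n := by exact_mod_cast K.npos
  rw [fK_eq, one_div_mul_eq_div, le_div_iff₀ (by positivity)]
  have hcount' := (Nat.cast_le (α := ℝ)).2 hcount
  push_cast at hcount'
  linarith

end CRG

theorem fK_lower_bound_paw (K : CRG) (h : ¬ CHom pawGraph K) :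
    (1 : ℝ) / 3 ≤ K.fK (2 / 3) :=
  K.one_third_le_fK_two_thirds (K.orderedEdgeCount_gray_le_of_not_chom_pawGraph h)
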